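/- arXiv:2108.12742 — 2 statements merged into one kernel-verified Lean document; each statement's English description precedes it below -/
import Mathlib

section
/- Let Δx > 0, let j ∈ ℤ, and let f_{j-3}, …, f_{j+3} be real numbers. If P is the unique polynomial of degree at most 6 whose cell averages over I_{j-3}, …, I_{j+3} equal the given data, then P(x_j + Δx/2) = (−3 f_{j-3} + 25 f_{j-2} − 101 f_{j-1} + 319 f_j + 214 f_{j+1} − 38 f_{j+2} + 4 f_{j+3})/420. -/
/-!
Both sides of the identity are linear in `P`, and `P` is a combination of the monomials
`x ^ i` with `i ≤ 6`. So it suffices that the stencil weights reproduce the interface value of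
each such monomial from its cell averages, which is a polynomial identity in `j` and `Δx`.
-/

open Finset Polynomial

noncomputable section

def cellAverage (Δx : ℝ) (g : ℝ → ℝ) (k : ℤ) : ℝ :=
  (1 / Δx) * ∫ x in ((k : ℝ) * Δx - Δx / 2)..((k : ℝ) * Δx + Δx / 2), g x

theorem cellAverage_pow (Δx : ℝ) (i : ℕ) (k : ℤ) :
    cellAverage Δx (· ^ i) k =
      (1 / Δx) * ((((k : ℝ) * Δx + Δx / 2) ^ (i + 1) - ((k : ℝ) * Δx - Δx / 2) ^ (i + 1))
        / (i + 1)) := by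
  rw [cellAverage, integral_pow]

theorem cellAverage_eval_eq_sum {P : ℝ[X]} {n : ℕ} (hP : P.natDegree < n) (Δx : ℝ) (k : ℤ) :
    cellAverage Δx P.eval k = ∑ i ∈ range n, P.coeff i * cellAverage Δx (· ^ i) k := by
  simp only [cellAverage, eval_eq_sum_range' hP]
  rw [intervalIntegral.integral_finsetSum (f := fun i x => P.coeff i * x ^ i)
    fun i _ => (continuous_const.mul (continuous_pow i)).intervalIntegrable _ _, mul_sum]
  refine sum_congr rfl fun i _ => ?_
  rw [intervalIntegral.integral_const_mul, mul_left_comm]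

theorem flux_weights_exact_pow {Δx : ℝ} (hΔx : Δx ≠ 0) (j : ℤ) {i : ℕ} (hi : i < 7) :
    (-3 * cellAverage Δx (· ^ i) (j - 3) + 25 * cellAverage Δx (· ^ i) (j - 2)
      - 101 * cellAverage Δx (· ^ i) (j - 1) + 319 * cellAverage Δx (· ^ i) j
      + 214 * cellAverage Δx (· ^ i) (j + 1) - 38 * cellAverage Δx (· ^ i) (j + 2)
      + 4 * cellAverage Δx (· ^ i) (j + 3)) / 420 = ((j : ℝ) * Δx + Δx / 2) ^ i := by
  simp only [cellAverage_pow]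
  push_cast
  interval_cases i <;> field_simp <;> ring

end

/-- Right-interface value of the reconstruction polynomial on the stencil
`S_{j+((-3))}^{j+(3)}`. -/
theorem flux_S_jm3_jp3
    (Δx : ℝ) (hΔx : 0 < Δx) (j : ℤ) (f : ℤ → ℝ)
    (P : Polynomial ℝ) (hdeg : P.degree ≤ (6 : ℕ))
    (havg : ∀ k : ℤ, j + ((-3)) ≤ k → k ≤ j + (3) →
      (1 / Δx) * ∫ x in ((k : ℝ) * Δx - Δx / 2)..((k : ℝ) * Δx + Δx / 2), P.eval x
        = f k) :
    P.eval ((j : ℝ) * Δx + Δx / 2) = (-3 * f (j - 3) + 25 * f (j - 2) - 101 * f (j - 1) + 319 * f j + 214 * f (j + 1) - 38 * f (j + 2) + 4 * f (j + 3)) / 420 := by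
  have hP : P.natDegree < 7 := Nat.lt_succ_of_le (natDegree_le_iff_degree_le.mpr hdeg)
  have hf : ∀ k : ℤ, j - 3 ≤ k → k ≤ j + 3 →
      f k = ∑ i ∈ range 7, P.coeff i * cellAverage Δx (· ^ i) k := fun k h₁ h₂ =>
    (havg k (by omega) h₂).symm.trans (cellAverage_eval_eq_sum hP Δx k)
  rw [hf (j - 3) le_rfl (by omega), hf (j - 2) (by omega) (by omega),
    hf (j - 1) (by omega) (by omega), hf j (by omega) (by omega), hf (j + 1) (by omega) (by omega),
    hf (j + 2) (by omega) (by omega), hf (j + 3) (by omega) le_rfl, eval_eq_sum_range' hP]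
  simp only [mul_sum, ← sum_add_distrib, ← sum_sub_distrib, sum_div]
  refine sum_congr rfl fun i hi => ?_
  rw [← flux_weights_exact_pow hΔx.ne' j (mem_range.mp hi)]
  ring
end

section
/- For every real κ, −1/4 + (2/5)·cos κ − (1/5)·cos 2κ + (2/35)·cos 3κ − (1/140)·cos 4κ ≤ 0; that is, the imaginary part of the modified wavenumber of the seventh-order central scheme on the stencil S_{j-3}^{j+3} is nonpositive for all wavenumbers, so this scheme is linearly stable. -/
/-!
In terms of `c = cos κ` the Chebyshev identities turn the expression into
`-(2/35) (1 - c)^4`, which is nonpositive; equivalently it is `-(32/35) sin^8 (κ/2)`,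
whose eighth-order zero at `κ = 0` reflects the seventh order of the scheme.
-/

open Real

lemma Real.cos_four_mul (x : ℝ) : cos (4 * x) = 8 * cos x ^ 4 - 8 * cos x ^ 2 + 1 := by
  rw [show 4 * x = 2 * (2 * x) by ring, cos_two_mul, cos_two_mul]
  ring

lemma modifiedWavenumber_im_S_jm3_jp3_eq (κ : ℝ) :
    -1 / 4 + (2 / 5) * cos κ - (1 / 5) * cos (2 * κ) + (2 / 35) * cos (3 * κ)
      - (1 / 140) * cos (4 * κ) = -(2 / 35 * (1 - cos κ) ^ 4) := by
  rw [cos_two_mul, cos_three_mul, cos_four_mul]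
  ring

/-- Linear stability of the seventh-order central scheme on `S_{j-3}^{j+3}`: the imaginary part of its modified wavenumber is nonpositive for all wavenumbers. -/
theorem linear_stability_S_jm3_jp3 (κ : ℝ) :
    -1 / 4 + (2 / 5) * Real.cos κ - (1 / 5) * Real.cos (2 * κ) + (2 / 35) * Real.cos (3 * κ) - (1 / 140) * Real.cos (4 * κ) ≤ 0 := by
  rw [modifiedWavenumber_im_S_jm3_jp3_eq]
  exact neg_nonpos.mpr (by positivity)
end
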